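/- For every N ≥ 0 and every m ∈ {1, 2, 3}, PPL_t(4N + m) = min(PPL_t(4N + m − 1), PPL_t(4N + m + 1)) + 1, where PPL_t(0) = 0. -/

import Mathlib

/-!
Palindromic factors of the Thue–Morse word are rigid: a palindrome of odd length has length
1 or 3 (`t` contains no cube `aaa`), and one of even length is centred at a multiple of 4,
since `t(i) = t(i+1)` forces `i` odd. As `t` is the fixed point of `0 ↦ 0110, 1 ↦ 1001`,
whose images are palindromes, an even palindrome extends to the union of the 4-blocks it meets.
Analysing the last palindrome of an optimal factorisation of `t(0) ⋯ t(n-1)` for `n = 4N+1`,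
`4N+2`, `4N+3` then shows, by strong induction on `N`, that
`PPL(4N+1) = PPL(4N) + 1`, `PPL(4N+3) = PPL(4N+4) + 1` and
`PPL(4N+2) = min (PPL(4N)) (PPL(4N+4)) + 2 > max (PPL(4N)) (PPL(4N+4))`.
-/

/-- The Thue–Morse word: `tm n` is the number of ones (sum of binary digits)
in the binary expansion of `n`, taken mod 2. -/
def tm (n : ℕ) : ℕ := (Nat.digits 2 n).sum % 2

/-- `ps` is a factorization of the finite word `w` into nonempty palindromes. -/
def IsPalDecomp (w : List ℕ) (ps : List (List ℕ)) : Prop :=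
  ps.flatten = w ∧ ∀ p ∈ ps, p ≠ [] ∧ p.Palindrome

/-- The palindromic length of a finite word: the least number of nonempty
palindromes whose concatenation is the word (0 for the empty word). -/
noncomputable def palLen (w : List ℕ) : ℕ :=
  sInf {k | ∃ ps, ps.length = k ∧ IsPalDecomp w ps}

/-- `pplTM n` is the palindromic length of the prefix of length `n`
of the Thue–Morse word. -/
noncomputable def pplTM (n : ℕ) : ℕ := palLen ((List.range n).map tm)

section PalLen

variable {w u p : List ℕ}

lemma palLen_le_length {ps : List (List ℕ)} (h : IsPalDecomp w ps) : palLen w ≤ ps.length :=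
  Nat.sInf_le ⟨ps, rfl, h⟩

lemma exists_isPalDecomp_length_eq_palLen (w : List ℕ) :
    ∃ ps, IsPalDecomp w ps ∧ ps.length = palLen w := by
  have hne : {k | ∃ ps, ps.length = k ∧ IsPalDecomp w ps}.Nonempty := by
    refine ⟨w.length, w.map ([·]), by simp, ?_, ?_⟩
    · induction w with
      | nil => rfl
      | cons a l ih => simpa using ih
    · simp [List.Palindrome.singleton]
  obtain ⟨ps, hlen, hps⟩ := Nat.sInf_mem hne
  exact ⟨ps, hps, hlen⟩

lemma palLen_append_le (hp : p.Palindrome) : palLen (u ++ p) ≤ palLen u + 1 := by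
  rcases eq_or_ne p [] with rfl | hne
  · simp
  obtain ⟨ps, ⟨rfl, hps⟩, hlen⟩ := exists_isPalDecomp_length_eq_palLen u
  have hdecomp : IsPalDecomp (ps.flatten ++ p) (ps ++ [p]) := by
    refine ⟨by simp, fun q hq => ?_⟩
    rcases List.mem_append.mp hq with hq | hq
    · exact hps q hq
    · rw [List.mem_singleton.mp hq]
      exact ⟨hne, hp⟩
  simpa [hlen] using palLen_le_length hdecomp

lemma exists_append_palLen_eq_add_one (hw : w ≠ []) :
    ∃ u p, w = u ++ p ∧ p ≠ [] ∧ p.Palindrome ∧ palLen w = palLen u + 1 := by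
  obtain ⟨ps, ⟨hflat, hps⟩, hlen⟩ := exists_isPalDecomp_length_eq_palLen w
  rcases List.eq_nil_or_concat ps with rfl | ⟨qs, p, rfl⟩
  · exact absurd hflat.symm hw
  simp only [List.concat_eq_append, List.mem_append, List.mem_singleton] at hps hlen
  obtain ⟨hne, hp⟩ := hps p (Or.inr rfl)
  have hu : palLen qs.flatten ≤ qs.length :=
    palLen_le_length ⟨rfl, fun q hq => hps q (Or.inl hq)⟩
  have hw' : w = qs.flatten ++ p := by simp [← hflat]
  refine ⟨qs.flatten, p, hw', hne, hp, le_antisymm ?_ ?_⟩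
  · exact hw' ▸ palLen_append_le hp
  · simp only [List.length_append, List.length_singleton] at hlen
    omega

end PalLen

section ThueMorse

lemma tm_lt_two (n : ℕ) : tm n < 2 := Nat.mod_lt _ two_pos

lemma tm_two_mul (k : ℕ) : tm (2 * k) = tm k := by
  rcases Nat.eq_zero_or_pos k with rfl | hk
  · rfl
  · unfold tm
    rw [Nat.digits_def' one_lt_two (by omega)]
    simp

lemma tm_two_mul_add_one (k : ℕ) : tm (2 * k + 1) + tm k = 1 := by
  unfold tm
  rw [Nat.digits_def' one_lt_two (by omega), List.sum_cons]
  have h1 : (2 * k + 1) % 2 = 1 := by omega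
  have h2 : (2 * k + 1) / 2 = k := by omega
  rw [h1, h2]
  omega

lemma odd_of_tm_eq_tm_add_one {i : ℕ} (h : tm i = tm (i + 1)) : i % 2 = 1 := by
  obtain ⟨k, rfl | rfl⟩ := Nat.even_or_odd' i
  · have := tm_two_mul k
    have := tm_two_mul_add_one k
    omega
  · omega

lemma tm_four_mul (a : ℕ) : tm (4 * a) = tm a := by
  rw [show 4 * a = 2 * (2 * a) by ring, tm_two_mul, tm_two_mul]

lemma tm_four_mul_add_one (a : ℕ) : tm (4 * a + 1) + tm a = 1 := by
  rw [show 4 * a + 1 = 2 * (2 * a) + 1 by ring, ← tm_two_mul a]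
  exact tm_two_mul_add_one (2 * a)

lemma tm_four_mul_add_two (a : ℕ) : tm (4 * a + 2) + tm a = 1 := by
  rw [show 4 * a + 2 = 2 * (2 * a + 1) by ring, tm_two_mul]
  exact tm_two_mul_add_one a

lemma tm_four_mul_add_three (a : ℕ) : tm (4 * a + 3) = tm a := by
  have h1 := tm_two_mul_add_one (2 * a + 1)
  have h2 := tm_two_mul_add_one a
  have := tm_lt_two (4 * a + 3)
  have := tm_lt_two a
  rw [show 2 * (2 * a + 1) + 1 = 4 * a + 3 by ring] at h1
  omega

lemma tm_four_mul_add_eq_iff {a n i : ℕ} (hi : i < 4) :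
    tm (4 * a + i) = tm (4 * n + i) ↔ tm a = tm n := by
  have := tm_lt_two a
  have := tm_lt_two n
  interval_cases i
  · simp only [add_zero, tm_four_mul]
  · have := tm_four_mul_add_one a
    have := tm_four_mul_add_one n
    omega
  · have := tm_four_mul_add_two a
    have := tm_four_mul_add_two n
    omega
  · simp only [tm_four_mul_add_three]

-- `t(j) ⋯ t(n-1)` is a palindrome: positions `a` and `b` are mirror images iff `a + b + 1 = j + n`.
def IsPalFactor (j n : ℕ) : Prop :=
  ∀ a b : ℕ, j ≤ a → a < n → a + b + 1 = j + n → tm a = tm b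

lemma isPalFactor_add_one (n : ℕ) : IsPalFactor n (n + 1) :=
  fun _ _ _ _ _ => congrArg tm (by omega)

lemma isPalFactor_four_mul (a : ℕ) : IsPalFactor (4 * a) (4 * a + 4) := by
  intro x y hx hxa hxy
  have := tm_four_mul a
  have := tm_four_mul_add_one a
  have := tm_four_mul_add_two a
  have := tm_four_mul_add_three a
  obtain ⟨rfl, rfl⟩ | ⟨rfl, rfl⟩ | ⟨rfl, rfl⟩ | ⟨rfl, rfl⟩ :
      x = 4 * a ∧ y = 4 * a + 3 ∨ x = 4 * a + 1 ∧ y = 4 * a + 2 ∨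
      x = 4 * a + 2 ∧ y = 4 * a + 1 ∨ x = 4 * a + 3 ∧ y = 4 * a := by
    omega
  all_goals omega

namespace IsPalFactor

variable {j n : ℕ}

lemma mono {j' n' : ℕ} (h : IsPalFactor j n) (hj : j ≤ j') (hc : j' + n' = j + n) :
    IsPalFactor j' n' :=
  fun a b ha han hab => h a b (by omega) (by omega) (by omega)

lemma length_cases (h : IsPalFactor j n) (hjn : j < n) :
    n = j + 1 ∨ n = j + 3 ∨ (j + n) % 4 = 0 := by
  rcases Nat.even_or_odd' (j + n) with ⟨c, hc | hc⟩
  · obtain ⟨i, rfl⟩ : ∃ i, c = i + 1 := ⟨c - 1, by omega⟩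
    have := odd_of_tm_eq_tm_add_one (h i (i + 1) (by omega) (by omega) (by omega))
    omega
  · by_contra! hlong
    obtain ⟨d, rfl⟩ : ∃ d, c = d + 2 := ⟨c - 2, by omega⟩
    have h13 : tm (d + 1) = tm (d + 3) := h _ _ (by omega) (by omega) (by omega)
    have h04 : tm d = tm (d + 4) := h _ _ (by omega) (by omega) (by omega)
    -- either parity of `d` yields a cube `t(k) t(k+1) t(k+2)`, but `k`, `k+1` are not both odd
    suffices ∃ k, tm k = tm (k + 1) ∧ tm (k + 1) = tm (k + 2) by
      obtain ⟨k, hk, hk'⟩ := this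
      have := odd_of_tm_eq_tm_add_one hk
      have := odd_of_tm_eq_tm_add_one hk'
      omega
    obtain ⟨k, rfl | rfl⟩ := Nat.even_or_odd' d
    · have : tm (2 * k + 1) + tm k = 1 := tm_two_mul_add_one k
      have : tm (2 * k + 3) + tm (k + 1) = 1 := tm_two_mul_add_one (k + 1)
      have : tm (2 * k) = tm k := tm_two_mul k
      have : tm (2 * k + 4) = tm (k + 2) := tm_two_mul (k + 2)
      have := tm_lt_two k
      refine ⟨k, ?_, ?_⟩ <;> omega
    · simp only [add_assoc, Nat.reduceAdd] at h13 h04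
      have : tm (2 * k + 1) + tm k = 1 := tm_two_mul_add_one k
      have : tm (2 * k + 5) + tm (k + 2) = 1 := tm_two_mul_add_one (k + 2)
      have : tm (2 * k + 2) = tm (k + 1) := tm_two_mul (k + 1)
      have : tm (2 * k + 4) = tm (k + 2) := tm_two_mul (k + 2)
      have := tm_lt_two k
      refine ⟨k, ?_, ?_⟩ <;> omega

-- `t(4a) ⋯ t(4a+3)` and `t(4n) ⋯ t(4n+3)` are palindromes, equal since `t(a) = t(n)` is
-- forced by the outermost letters of the even palindrome.
lemma extend_to_blocks {a r s : ℕ} (h : IsPalFactor (4 * a + r) (4 * n + s)) (hr : r < 4)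
    (hrs : r + s = 4) (han : 4 * a + r < 4 * n + s) : IsPalFactor (4 * a) (4 * n + 4) := by
  have hend : tm a = tm n := by
    have hout : tm (4 * a + r) = tm (4 * n + (3 - r)) := h _ _ le_rfl han (by omega)
    have hblock : tm (4 * n + (3 - r)) = tm (4 * n + r) :=
      isPalFactor_four_mul n _ _ (by omega) (by omega) (by omega)
    exact (tm_four_mul_add_eq_iff hr).1 (hout.trans hblock)
  intro x y hx hxn hxy
  by_cases hlo : x < 4 * a + r
  · obtain ⟨i, hi, rfl⟩ : ∃ i < 4, x = 4 * a + i := ⟨x - 4 * a, by omega, by omega⟩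
    rw [(tm_four_mul_add_eq_iff hi).2 hend]
    exact isPalFactor_four_mul n _ _ (by omega) (by omega) (by omega)
  by_cases hhi : 4 * n + s ≤ x
  · obtain ⟨i, hi, rfl⟩ : ∃ i < 4, y = 4 * a + i := ⟨y - 4 * a, by omega, by omega⟩
    rw [(tm_four_mul_add_eq_iff hi).2 hend]
    exact isPalFactor_four_mul n _ _ (by omega) (by omega) (by omega)
  exact h x y (by omega) (by omega) (by omega)

end IsPalFactor

lemma isPalFactor_iff_palindrome_drop (j n : ℕ) :
    IsPalFactor j n ↔ (((List.range n).map tm).drop j).Palindrome := by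
  rw [List.Palindrome.iff_reverse_eq, List.ext_getElem_iff]
  simp only [List.length_reverse, List.getElem_reverse, List.length_drop, List.length_map,
    List.length_range, List.getElem_drop, List.getElem_map, List.getElem_range, true_and]
  constructor
  · intro h i _ hi
    exact h _ _ (by omega) (by omega) (by omega)
  · intro h a b ha han hab
    have := h (b - j) (by omega) (by omega)
    convert this using 2 <;> omega

end ThueMorse

section PplTM

lemma pplTM_le_of_isPalFactor {j n : ℕ} (hjn : j ≤ n) (h : IsPalFactor j n) :
    pplTM n ≤ pplTM j + 1 := by
  have := palLen_append_le (u := ((List.range n).map tm).take j)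
    ((isPalFactor_iff_palindrome_drop j n).1 h)
  rwa [List.take_append_drop, ← List.map_take, List.take_range, min_eq_left hjn] at this

lemma exists_isPalFactor_pplTM_eq {n : ℕ} (hn : 0 < n) :
    ∃ j < n, IsPalFactor j n ∧ pplTM n = pplTM j + 1 := by
  obtain ⟨u, p, hw, hne, hp, hlen⟩ :=
    exists_append_palLen_eq_add_one (w := (List.range n).map tm) (by simpa using hn.ne')
  have hj : u.length < n := by
    have hlen := congrArg List.length hw
    simp only [List.length_map, List.length_range, List.length_append] at hlen
    have := List.length_pos_iff.mpr hne
    omega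
  have hu : (List.range u.length).map tm = u := by
    rw [← min_eq_left hj.le, ← List.take_range, List.map_take, hw, List.take_left]
  refine ⟨u.length, hj, ?_, ?_⟩
  · rw [isPalFactor_iff_palindrome_drop, hw, List.drop_left]
    exact hp
  · rw [pplTM, pplTM, hu]
    exact hlen

lemma pplTM_succ_le (n : ℕ) : pplTM (n + 1) ≤ pplTM n + 1 :=
  pplTM_le_of_isPalFactor n.le_succ (isPalFactor_add_one n)

-- If the last palindrome of `t(0) ⋯ t(n)` is `a q a`, then `t(0) ⋯ t(n-1)` ends with `a q`.
lemma pplTM_le_succ (n : ℕ) : pplTM n ≤ pplTM (n + 1) + 1 := by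
  obtain ⟨j, hj, hpal, hppl⟩ := exists_isPalFactor_pplTM_eq (n := n + 1) (by omega)
  by_cases hjn : j = n
  · subst hjn
    omega
  have := pplTM_le_of_isPalFactor (show j + 1 ≤ n by omega) (hpal.mono (by omega) (by omega))
  have := pplTM_succ_le j
  omega

structure BlockShape (n : ℕ) : Prop where
  eq_one : pplTM (4 * n + 1) = pplTM (4 * n) + 1
  lt_two_left : pplTM (4 * n) < pplTM (4 * n + 2)
  lt_two_right : pplTM (4 * n + 4) < pplTM (4 * n + 2)
  eq_two : pplTM (4 * n + 2) = min (pplTM (4 * n)) (pplTM (4 * n + 4)) + 2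
  eq_three : pplTM (4 * n + 3) = pplTM (4 * n + 4) + 1

variable {n : ℕ}

lemma pplTM_four_mul_add_one (ih : ∀ m < n, BlockShape m) :
    pplTM (4 * n + 1) = pplTM (4 * n) + 1 := by
  refine le_antisymm (pplTM_succ_le _) ?_
  obtain ⟨j, hj, hpal, hppl⟩ := exists_isPalFactor_pplTM_eq (n := 4 * n + 1) (by omega)
  rcases hpal.length_cases hj with h | h | h
  · obtain rfl : j = 4 * n := by omega
    exact hppl.ge
  · obtain ⟨m, hm, rfl⟩ : ∃ m < n, j = 4 * m + 2 := ⟨n - 1, by omega, by omega⟩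
    have h3 : pplTM (4 * m + 3) = pplTM (4 * n) + 1 := by
      convert (ih m hm).eq_three using 3
      omega
    have : pplTM (4 * m + 3) ≤ pplTM (4 * m + 2) + 1 := pplTM_succ_le _
    omega
  · obtain ⟨b, hb, rfl⟩ : ∃ b < n, j = 4 * b + 3 := ⟨j / 4, by omega, by omega⟩
    have := pplTM_le_of_isPalFactor (j := 4 * b + 4) (n := 4 * n) (by omega)
      (hpal.mono (by omega) (by omega))
    have := (ih b hb).eq_three
    omega

lemma pplTM_four_mul_add_two (ih : ∀ m < n, BlockShape m)
    (h1 : pplTM (4 * n + 1) = pplTM (4 * n) + 1) :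
    pplTM (4 * n) < pplTM (4 * n + 2) ∧ pplTM (4 * n + 4) < pplTM (4 * n + 2) ∧
      pplTM (4 * n + 2) = min (pplTM (4 * n)) (pplTM (4 * n + 4)) + 2 := by
  have : pplTM (4 * n + 2) ≤ pplTM (4 * n + 1) + 1 := pplTM_succ_le _
  have : pplTM (4 * n + 2) ≤ pplTM (4 * n + 3) + 1 := pplTM_le_succ _
  have : pplTM (4 * n + 3) ≤ pplTM (4 * n + 4) + 1 := pplTM_le_succ _
  have : pplTM (4 * n + 4) ≤ pplTM (4 * n) + 1 :=
    pplTM_le_of_isPalFactor (by omega) (isPalFactor_four_mul n)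
  obtain ⟨j, hj, hpal, hppl⟩ := exists_isPalFactor_pplTM_eq (n := 4 * n + 2) (by omega)
  rcases hpal.length_cases hj with h | h | h
  · obtain rfl : j = 4 * n + 1 := by omega
    omega
  · obtain ⟨m, hm, rfl⟩ : ∃ m < n, j = 4 * m + 3 := ⟨n - 1, by omega, by omega⟩
    have : pplTM (4 * m + 3) = pplTM (4 * n) + 1 := by
      convert (ih m hm).eq_three using 3
      omega
    omega
  · obtain ⟨a, ha, rfl⟩ : ∃ a < n, j = 4 * a + 2 := ⟨j / 4, by omega, by omega⟩
    have := pplTM_le_of_isPalFactor (by omega)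
      (hpal.extend_to_blocks (by omega) (by omega) (by omega))
    have := pplTM_le_of_isPalFactor (j := 4 * a + 4) (n := 4 * n) (by omega)
      (hpal.mono (by omega) (by omega))
    obtain ⟨-, h02, h42, h2, -⟩ := ih a ha
    omega

lemma pplTM_four_mul_add_three (ih : ∀ m < n, BlockShape m)
    (h1 : pplTM (4 * n + 1) = pplTM (4 * n) + 1) (h42 : pplTM (4 * n + 4) < pplTM (4 * n + 2)) :
    pplTM (4 * n + 3) = pplTM (4 * n + 4) + 1 := by
  refine le_antisymm (pplTM_le_succ _) ?_
  obtain ⟨j, hj, hpal, hppl⟩ := exists_isPalFactor_pplTM_eq (n := 4 * n + 3) (by omega)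
  rcases hpal.length_cases hj with h | h | h
  · obtain rfl : j = 4 * n + 2 := by omega
    omega
  · obtain rfl : j = 4 * n := by omega
    have := hpal (4 * n) (4 * n + 2) le_rfl (by omega) (by omega)
    have := tm_four_mul n
    have := tm_four_mul_add_two n
    have := tm_lt_two n
    omega
  · obtain ⟨b, hb, rfl⟩ : ∃ b ≤ n, j = 4 * b + 1 := ⟨j / 4, by omega, by omega⟩
    have hb1 : pplTM (4 * b + 1) = pplTM (4 * b) + 1 := by
      rcases hb.lt_or_eq with hb | rfl
      · exact (ih b hb).eq_one
      · exact h1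
    have := pplTM_le_of_isPalFactor (by omega)
      (hpal.extend_to_blocks (by omega) (by omega) (by omega))
    omega

theorem blockShape (n : ℕ) : BlockShape n := by
  induction n using Nat.strong_induction_on with
  | _ n ih =>
    have h1 := pplTM_four_mul_add_one ih
    obtain ⟨h02, h42, h2⟩ := pplTM_four_mul_add_two ih h1
    exact ⟨h1, h02, h42, h2, pplTM_four_mul_add_three ih h1 h42⟩

end PplTM

/-- For every `N ≥ 0` and every `m ∈ {1, 2, 3}`,
`PPL_t(4N + m) = min(PPL_t(4N + m − 1), PPL_t(4N + m + 1)) + 1`. -/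
theorem pplTM_middle_min (N m : ℕ) (hm : m ∈ ({1, 2, 3} : Set ℕ)) :
    pplTM (4 * N + m) =
      min (pplTM (4 * N + m - 1)) (pplTM (4 * N + m + 1)) + 1 := by
  obtain ⟨h1, h02, h42, h2, h3⟩ := blockShape N
  rcases hm with rfl | rfl | rfl <;>
    simp only [Nat.reduceSubDiff, Nat.add_sub_cancel, Nat.add_assoc, Nat.reduceAdd] <;> omega
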